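/- (Small-gain theorem, backward case) Let Ψ : D ⇉ Y1 × Y2 be the feedback interconnection of Ψ1 : Y2 × U1 ⇉ Y1 and Ψ2 : Y1 × U2 ⇉ Y2 with D = U1 × U2, i.e., Ψ(d1,d2) = { (y1,y2) : y1 ∈ Ψ1(y2,d1), y2 ∈ Ψ2(y1,d2) }. Let A, B be families of subsets of D and Y1 × Y2. Suppose the backward small-gain property holds: for each B' ∈ B there exists A' ∈ A such that for every (y1,y2) ∉ B' there exist n1, n2 ≥ 1 with Γ12^{n1}(y1,A') × Γ21^{n2}(y2,A') ⊆ B'. Then Ψ is backward (↑A, B)-stable: Ψ⁻(B') ∈ ↑A for every B' ∈ B. -/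

import Mathlib

open Set

def IsFilterFam {X : Type*} (F : Set (Set X)) : Prop :=
  F.Nonempty ∧ (∀ A B : Set X, A ∈ F → A ⊆ B → B ∈ F) ∧
    (∀ A B : Set X, A ∈ F → B ∈ F → A ∩ B ∈ F)

def IsIdealFam {X : Type*} (I : Set (Set X)) : Prop :=
  I.Nonempty ∧ (∀ A B : Set X, A ∈ I → B ⊆ A → B ∈ I) ∧
    (∀ A B : Set X, A ∈ I → B ∈ I → A ∪ B ∈ I)

def downcl {X : Type*} (C : Set (Set X)) : Set (Set X) := {S | ∃ B ∈ C, S ⊆ B}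

def upcl {X : Type*} (C : Set (Set X)) : Set (Set X) := {S | ∃ B ∈ C, B ⊆ S}

def otimes {X Y : Type*} (C1 : Set (Set X)) (C2 : Set (Set Y)) : Set (Set (X × Y)) :=
  {S | ∃ A ∈ C1, ∃ B ∈ C2, S = A ×ˢ B}

def img {D Y : Type*} (Ψ : D → Set Y) (S : Set D) : Set Y := ⋃ d ∈ S, Ψ d

def uinv {D Y : Type*} (Ψ : D → Set Y) (V : Set Y) : Set D := {d | Ψ d ⊆ V}

def nbds {X : Type*} [TopologicalSpace X] (S : Set X) : Set (Set X) :=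
  {N | ∃ O : Set X, IsOpen O ∧ S ⊆ O ∧ O ⊆ N}

variable {Y1 Y2 U1 U2 : Type*}

def fb (Ψ1 : Y2 × U1 → Set Y1) (Ψ2 : Y1 × U2 → Set Y2) (d : U1 × U2) :
    Set (Y1 × Y2) :=
  {y | y.1 ∈ Ψ1 (y.2, d.1) ∧ y.2 ∈ Ψ2 (y.1, d.2)}

def Ups1 (Ψ1 : Y2 × U1 → Set Y1) (Ψ2 : Y1 × U2 → Set Y2) (A : Set (U1 × U2)) :
    Set Y1 :=
  {y1 | ∃ d ∈ A, ∃ y2, (y1, y2) ∈ fb Ψ1 Ψ2 d}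

def Ups2 (Ψ1 : Y2 × U1 → Set Y1) (Ψ2 : Y1 × U2 → Set Y2) (A : Set (U1 × U2)) :
    Set Y2 :=
  {y2 | ∃ d ∈ A, ∃ y1, (y1, y2) ∈ fb Ψ1 Ψ2 d}

def Gam12 (Ψ1 : Y2 × U1 → Set Y1) (Ψ2 : Y1 × U2 → Set Y2)
    (y1 : Y1) (d : U1 × U2) : Set Y1 :=
  ⋃ y2 ∈ Ψ2 (y1, d.2), Ψ1 (y2, d.1)

def Gam21 (Ψ1 : Y2 × U1 → Set Y1) (Ψ2 : Y1 × U2 → Set Y2)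
    (y2 : Y2) (d : U1 × U2) : Set Y2 :=
  ⋃ y1 ∈ Ψ1 (y2, d.1), Ψ2 (y1, d.2)

def gpow {Y P : Type*} (Γ : Y → P → Set Y) : ℕ → Y → P → Set Y
  | 0, y, _ => {y}
  | n + 1, y, d => ⋃ z ∈ gpow Γ n y d, Γ z d

def gpowSet {Y U1 U2 : Type*} (Γ : Y → U1 × U2 → Set Y) (n : ℕ) (y : Y)
    (A : Set (U1 × U2)) : Set Y :=
  ⋃ d ∈ A, gpow Γ n y d

/-! A point `(y1, y2)` of `fb Ψ1 Ψ2 d` is a fixed point of both loop maps `Gam12 · d` and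
`Gam21 · d`, so it lies in all of their iterates. If it were outside `B'`, the small-gain
hypothesis would put it inside `B'`; hence `fb Ψ1 Ψ2 d ⊆ B'` for every `d ∈ A'`. -/

lemma mem_gpow_self {Y P : Type*} {Γ : Y → P → Set Y} {y : Y} {d : P} (h : y ∈ Γ y d) :
    ∀ n, y ∈ gpow Γ n y d
  | 0 => rfl
  | n + 1 => mem_biUnion (mem_gpow_self h n) h

lemma mem_gpowSet_self {Y U1 U2 : Type*} {Γ : Y → U1 × U2 → Set Y} {y : Y}
    {A : Set (U1 × U2)} {d : U1 × U2} (hd : d ∈ A) (h : y ∈ Γ y d) (n : ℕ) :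
    y ∈ gpowSet Γ n y A :=
  mem_biUnion hd (mem_gpow_self h n)

section Feedback

variable {Ψ1 : Y2 × U1 → Set Y1} {Ψ2 : Y1 × U2 → Set Y2} {y : Y1 × Y2} {d : U1 × U2}

lemma fst_mem_gam12_of_mem_fb (h : y ∈ fb Ψ1 Ψ2 d) : y.1 ∈ Gam12 Ψ1 Ψ2 y.1 d :=
  mem_biUnion h.2 h.1

lemma snd_mem_gam21_of_mem_fb (h : y ∈ fb Ψ1 Ψ2 d) : y.2 ∈ Gam21 Ψ1 Ψ2 y.2 d :=
  mem_biUnion h.1 h.2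

end Feedback

theorem stmt18 (Ψ1 : Y2 × U1 → Set Y1) (Ψ2 : Y1 × U2 → Set Y2)
    (A : Set (Set (U1 × U2))) (B : Set (Set (Y1 × Y2)))
    (hsg : ∀ B' ∈ B, ∃ A' ∈ A, ∀ y : Y1 × Y2, y ∉ B' →
      ∃ n1 ≥ 1, ∃ n2 ≥ 1,
        (gpowSet (Gam12 Ψ1 Ψ2) n1 y.1 A') ×ˢ (gpowSet (Gam21 Ψ1 Ψ2) n2 y.2 A')
          ⊆ B') :
    ∀ B' ∈ B, uinv (fb Ψ1 Ψ2) B' ∈ upcl A := by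
  intro B' hB'
  obtain ⟨A', hA', hsg'⟩ := hsg B' hB'
  refine ⟨A', hA', fun d hd y hy => ?_⟩
  by_contra hyB
  obtain ⟨n1, -, n2, -, hsub⟩ := hsg' y hyB
  exact hyB <| hsub
    ⟨mem_gpowSet_self hd (fst_mem_gam12_of_mem_fb hy) n1,
      mem_gpowSet_self hd (snd_mem_gam21_of_mem_fb hy) n2⟩
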